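/- arXiv:2308.14680 — 2 statements merged into one kernel-verified Lean document; each statement's English description precedes it below -/
import Mathlib

section
/- Under the assumptions of the previous integration-by-parts identities, the quantity J₂ := ∫₀^∞ (|φ'(t)|² + (b₂t + ξ)²|φ(t)|²) t dt + ∫_{-∞}^0 (|φ'(t)|² + (b₁t + ξ)²|φ(t)|²) t dt equals β ∫_{-∞}^∞ |φ(t)|² t dt. -/
/-!
Along a solution of `u'' = (V - β) u`, the function `F = u u' t - u² / 2` satisfies
`F' = (u'² + V u²) t - β u² t`. Exponential decay of `u` and `u'` makes `F` vanish at `±∞`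
and makes every integrand integrable, so integrating `F'` over `(0, ∞)` gives `-F 0` and over
`(-∞, 0)` gives `F 0`; these cancel when the two half-lines are added.
-/

open Real MeasureTheory Set Filter Topology Asymptotics

section Virial

variable {u u' V : ℝ → ℝ} {β : ℝ}

noncomputable def virialPrimitive (u u' : ℝ → ℝ) (t : ℝ) : ℝ :=
  u t * u' t * t - u t ^ 2 / 2

theorem hasDerivAt_virialPrimitive {t : ℝ} (hu : HasDerivAt u (u' t) t)
    (hu' : HasDerivAt u' ((V t - β) * u t) t) :
    HasDerivAt (virialPrimitive u u')
      ((u' t ^ 2 + V t * u t ^ 2) * t - β * (u t ^ 2 * t)) t :=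
  (((hu.mul hu').mul (hasDerivAt_id t)).sub ((hu.pow 2).div_const 2)).congr_deriv <| by
    simp only [id, Pi.mul_apply]; push_cast; ring

theorem tendsto_virialPrimitive {l : Filter ℝ}
    (hlim : Tendsto (fun t => u t * u' t * t) l (𝓝 0)) (hlim_sq : Tendsto u l (𝓝 0)) :
    Tendsto (virialPrimitive u u') l (𝓝 0) := by
  have h := hlim.sub ((hlim_sq.pow 2).div_const 2)
  rwa [zero_pow two_ne_zero, zero_div, sub_zero] at h

theorem integral_Ioi_virial (hu : ContinuousWithinAt u (Ici 0) 0)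
    (hu' : ContinuousWithinAt u' (Ici 0) 0) (hderiv : ∀ t > 0, HasDerivAt u (u' t) t)
    (hode : ∀ t > 0, HasDerivAt u' ((V t - β) * u t) t)
    (hint : IntegrableOn (fun t => (u' t ^ 2 + V t * u t ^ 2) * t) (Ioi 0))
    (hint_sq : IntegrableOn (fun t => u t ^ 2 * t) (Ioi 0))
    (hlim : Tendsto (fun t => u t * u' t * t) atTop (𝓝 0)) (hlim_sq : Tendsto u atTop (𝓝 0)) :
    ∫ t in Ioi 0, (u' t ^ 2 + V t * u t ^ 2) * t =
      u 0 ^ 2 / 2 + β * ∫ t in Ioi 0, u t ^ 2 * t := by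
  have hFTC := integral_Ioi_of_hasDerivAt_of_tendsto (f := virialPrimitive u u')
    (((hu.mul hu').mul continuousWithinAt_id).sub ((hu.pow 2).div_const 2))
    (fun t ht => hasDerivAt_virialPrimitive (hderiv t ht) (hode t ht))
    (hint.sub (hint_sq.const_mul β))
    (tendsto_virialPrimitive hlim hlim_sq)
  rw [integral_sub hint (hint_sq.const_mul β), integral_const_mul] at hFTC
  simp only [virialPrimitive, mul_zero] at hFTC
  linarith

theorem integral_Iio_virial (hu : ContinuousWithinAt u (Iic 0) 0)
    (hu' : ContinuousWithinAt u' (Iic 0) 0) (hderiv : ∀ t < 0, HasDerivAt u (u' t) t)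
    (hode : ∀ t < 0, HasDerivAt u' ((V t - β) * u t) t)
    (hint : IntegrableOn (fun t => (u' t ^ 2 + V t * u t ^ 2) * t) (Iio 0))
    (hint_sq : IntegrableOn (fun t => u t ^ 2 * t) (Iio 0))
    (hlim : Tendsto (fun t => u t * u' t * t) atBot (𝓝 0)) (hlim_sq : Tendsto u atBot (𝓝 0)) :
    ∫ t in Iio 0, (u' t ^ 2 + V t * u t ^ 2) * t =
      -(u 0 ^ 2 / 2) + β * ∫ t in Iio 0, u t ^ 2 * t := by
  rw [← integrableOn_Iic_iff_integrableOn_Iio] at hint hint_sq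
  have hFTC := integral_Iic_of_hasDerivAt_of_tendsto (f := virialPrimitive u u')
    (((hu.mul hu').mul continuousWithinAt_id).sub ((hu.pow 2).div_const 2))
    (fun t ht => hasDerivAt_virialPrimitive (hderiv t ht) (hode t ht))
    (hint.sub (hint_sq.const_mul β))
    (tendsto_virialPrimitive hlim hlim_sq)
  rw [integral_sub hint (hint_sq.const_mul β), integral_const_mul, integral_Iic_eq_integral_Iio,
    integral_Iic_eq_integral_Iio] at hFTC
  simp only [virialPrimitive, mul_zero] at hFTC
  linarith

end Virial

section ExpDecay

variable {a : ℝ}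

theorem tendsto_exp_neg_mul_abs_cocompact (ha : 0 < a) :
    Tendsto (fun t : ℝ => exp (-a * |t|)) (cocompact ℝ) (𝓝 0) :=
  tendsto_exp_atBot.comp <|
    tendsto_norm_cocompact_atTop.const_mul_atTop_of_neg (neg_neg_iff_pos.2 ha)

theorem integrable_exp_neg_mul_abs (ha : 0 < a) : Integrable fun t : ℝ => exp (-a * |t|) := by
  refine (by fun_prop : Continuous fun t : ℝ => exp (-a * |t|)).locallyIntegrable
    |>.integrable_of_isBigO_atTop_of_norm_isNegInvariant (g := fun t => exp (-a * t))
    (Eventually.of_forall fun t => by simp) ?_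
    ⟨Ioi 0, Ioi_mem_atTop 0, exp_neg_integrableOn_Ioi 0 ha⟩
  refine (isBigO_refl _ _).congr' ?_ EventuallyEq.rfl
  filter_upwards [eventually_ge_atTop 0] with t ht
  rw [abs_of_nonneg ht]

theorem integrable_of_isBigO_exp_neg_mul_abs {f : ℝ → ℝ} (ha : 0 < a) (hf : Continuous f)
    (ho : f =O[cocompact ℝ] fun t => exp (-a * |t|)) : Integrable f :=
  hf.locallyIntegrable.integrable_of_isBigO_cocompact ho
    ((integrable_exp_neg_mul_abs ha).integrableAtFilter _)

theorem isBigO_mul_mul_exp_neg_mul_abs {p f g : ℝ → ℝ}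
    (hp : p =O[cocompact ℝ] fun t => exp (a * |t|))
    (hf : f =O[cocompact ℝ] fun t => exp (-a * |t|))
    (hg : g =O[cocompact ℝ] fun t => exp (-a * |t|)) :
    (fun t => p t * (f t * g t)) =O[cocompact ℝ] fun t => exp (-a * |t|) :=
  (hp.mul (hf.mul hg)).congr_right fun t => by rw [← exp_add, ← exp_add]; ring_nf

theorem abs_pow_isLittleO_exp_mul_abs (n : ℕ) (ha : 0 < a) :
    (fun t : ℝ => |t| ^ n) =o[cocompact ℝ] fun t => exp (a * |t|) :=
  (isLittleO_pow_exp_pos_mul_atTop n ha).comp_tendsto tendsto_norm_cocompact_atTop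

theorem id_isBigO_exp_mul_abs (ha : 0 < a) :
    (fun t : ℝ => t) =O[cocompact ℝ] fun t => exp (a * |t|) :=
  (isBigO_abs_right.2 (isBigO_refl _ _)).trans <| by
    simpa using (abs_pow_isLittleO_exp_mul_abs 1 ha).isBigO

theorem sq_linear_mul_id_isBigO_exp_mul_abs (b ξ : ℝ) (ha : 0 < a) :
    (fun t : ℝ => (b * t + ξ) ^ 2 * t) =O[cocompact ℝ] fun t => exp (a * |t|) := by
  have hid : (fun t : ℝ => t) =O[cocompact ℝ] fun t => |t| :=
    isBigO_abs_right.2 (isBigO_refl _ _)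
  have hlin : (fun t : ℝ => b * t + ξ) =O[cocompact ℝ] fun t => |t| :=
    (hid.const_mul_left b).add
      ((isLittleO_const_id_atTop ξ).comp_tendsto tendsto_norm_cocompact_atTop).isBigO
  exact ((hlin.pow 2).mul hid).trans
    ((abs_pow_isLittleO_exp_mul_abs 3 ha).isBigO.congr_left fun t => by ring)

end ExpDecay

theorem integral_Ioi_add_integral_Iio_virial_of_isBigO {u u' V₁ V₂ : ℝ → ℝ} {a β : ℝ}
    (ha : 0 < a) (hu' : Continuous u') (hV₁ : Continuous V₁) (hV₂ : Continuous V₂)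
    (hderiv : ∀ t, HasDerivAt u (u' t) t)
    (hode₂ : ∀ t > 0, HasDerivAt u' ((V₂ t - β) * u t) t)
    (hode₁ : ∀ t < 0, HasDerivAt u' ((V₁ t - β) * u t) t)
    (hV₁_growth : (fun t => V₁ t * t) =O[cocompact ℝ] fun t => exp (a * |t|))
    (hV₂_growth : (fun t => V₂ t * t) =O[cocompact ℝ] fun t => exp (a * |t|))
    (hu_decay : u =O[cocompact ℝ] fun t => exp (-a * |t|))
    (hu'_decay : u' =O[cocompact ℝ] fun t => exp (-a * |t|)) :
    (∫ t in Ioi 0, (u' t ^ 2 + V₂ t * u t ^ 2) * t)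
      + (∫ t in Iio 0, (u' t ^ 2 + V₁ t * u t ^ 2) * t) = β * ∫ t, u t ^ 2 * t := by
  have hu : Continuous u := continuous_iff_continuousAt.2 fun t => (hderiv t).continuousAt
  have hid := id_isBigO_exp_mul_abs ha
  have hexp := tendsto_exp_neg_mul_abs_cocompact ha
  have henergy {V : ℝ → ℝ} (hV : Continuous V)
      (hV_growth : (fun t => V t * t) =O[cocompact ℝ] fun t => exp (a * |t|)) :
      Integrable fun t => (u' t ^ 2 + V t * u t ^ 2) * t :=
    integrable_of_isBigO_exp_neg_mul_abs ha (by fun_prop) <|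
      ((isBigO_mul_mul_exp_neg_mul_abs hid hu'_decay hu'_decay).add
        (isBigO_mul_mul_exp_neg_mul_abs hV_growth hu_decay hu_decay)).congr_left fun t => by ring
  have hsq : Integrable fun t => u t ^ 2 * t :=
    integrable_of_isBigO_exp_neg_mul_abs ha (by fun_prop) <|
      (isBigO_mul_mul_exp_neg_mul_abs hid hu_decay hu_decay).congr_left fun t => by ring
  have hlim : Tendsto (fun t => u t * u' t * t) (cocompact ℝ) (𝓝 0) :=
    ((isBigO_mul_mul_exp_neg_mul_abs hid hu_decay hu'_decay).trans_tendsto hexp).congr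
      fun t => by ring
  have hlim_sq := hu_decay.trans_tendsto hexp
  rw [integral_Ioi_virial hu.continuousWithinAt hu'.continuousWithinAt (fun t _ => hderiv t)
      hode₂ (henergy hV₂ hV₂_growth).integrableOn hsq.integrableOn
      (hlim.mono_left atTop_le_cocompact) (hlim_sq.mono_left atTop_le_cocompact),
    integral_Iio_virial hu.continuousWithinAt hu'.continuousWithinAt (fun t _ => hderiv t)
      hode₁ (henergy hV₁ hV₁_growth).integrableOn hsq.integrableOn
      (hlim.mono_left atBot_le_cocompact) (hlim_sq.mono_left atBot_le_cocompact),
    ← intervalIntegral.integral_Iio_add_Ici hsq.integrableOn hsq.integrableOn,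
    integral_Ici_eq_integral_Ioi]
  ring

theorem stmt6_general (b₁ b₂ ξ β : ℝ) (φ : ℝ → ℝ)
    (hC1 : ContDiff ℝ 1 φ)
    (hdecay : ∃ C a : ℝ, 0 < a ∧ ∀ t : ℝ,
      |φ t| ≤ C * Real.exp (-a * |t|) ∧ |deriv φ t| ≤ C * Real.exp (-a * |t|))
    (hodePos : ∀ t > (0 : ℝ), HasDerivAt (deriv φ) (((b₂ * t + ξ) ^ 2 - β) * φ t) t)
    (hodeNeg : ∀ t < (0 : ℝ), HasDerivAt (deriv φ) (((b₁ * t + ξ) ^ 2 - β) * φ t) t) :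
    (∫ t in Set.Ioi (0 : ℝ), ((deriv φ t) ^ 2 + (b₂ * t + ξ) ^ 2 * (φ t) ^ 2) * t)
      + (∫ t in Set.Iio (0 : ℝ), ((deriv φ t) ^ 2 + (b₁ * t + ξ) ^ 2 * (φ t) ^ 2) * t)
      = β * ∫ t : ℝ, (φ t) ^ 2 * t := by
  obtain ⟨C, a, ha, hbound⟩ := hdecay
  have hdecay_of_le {f : ℝ → ℝ} (hf : ∀ t, |f t| ≤ C * exp (-a * |t|)) :
      f =O[cocompact ℝ] fun t => exp (-a * |t|) :=
    isBigO_of_le' _ fun t => by simpa using hf t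
  exact integral_Ioi_add_integral_Iio_virial_of_isBigO (V₁ := fun t => (b₁ * t + ξ) ^ 2)
    (V₂ := fun t => (b₂ * t + ξ) ^ 2) ha (hC1.continuous_deriv le_rfl) (by fun_prop)
    (by fun_prop) (fun t => (hC1.differentiable one_ne_zero t).hasDerivAt) hodePos hodeNeg
    (sq_linear_mul_id_isBigO_exp_mul_abs b₁ ξ ha)
    (sq_linear_mul_id_isBigO_exp_mul_abs b₂ ξ ha)
    (hdecay_of_le fun t => (hbound t).1) (hdecay_of_le fun t => (hbound t).2)

/-- Under the hypotheses of the integration-by-parts identities, the quantity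
`J₂ = ∫₀^∞ (φ'² + (b₂t+ξ)²φ²) t dt + ∫_{-∞}^0 (φ'² + (b₁t+ξ)²φ²) t dt`
equals `β ∫_{-∞}^∞ φ² t dt`. -/
theorem stmt6 (b₁ b₂ ξ β : ℝ) (φ : ℝ → ℝ)
    (hC1 : ContDiff ℝ 1 φ)
    (hdecay : ∃ C a : ℝ, 0 < a ∧ ∀ t : ℝ,
      |φ t| ≤ C * Real.exp (-a * |t|) ∧ |deriv φ t| ≤ C * Real.exp (-a * |t|))
    (hnorm : (∫ t : ℝ, (φ t) ^ 2) = 1)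
    (hodePos : ∀ t > (0 : ℝ), HasDerivAt (deriv φ) (((b₂ * t + ξ) ^ 2 - β) * φ t) t)
    (hodeNeg : ∀ t < (0 : ℝ), HasDerivAt (deriv φ) (((b₁ * t + ξ) ^ 2 - β) * φ t) t) :
    (∫ t in Set.Ioi (0 : ℝ), ((deriv φ t) ^ 2 + (b₂ * t + ξ) ^ 2 * (φ t) ^ 2) * t)
      + (∫ t in Set.Iio (0 : ℝ), ((deriv φ t) ^ 2 + (b₁ * t + ξ) ^ 2 * (φ t) ^ 2) * t)
      = β * ∫ t : ℝ, (φ t) ^ 2 * t :=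
  stmt6_general b₁ b₂ ξ β φ hC1 hdecay hodePos hodeNeg
end

section
/- With η₊ as above, the quantity (-δM + 2‖η₊'‖²_{L²(ℝ₊)}) / (2‖η₊‖²_{L²(ℝ₊)}) equals -(M²/4)δ² + O(δ³) as δ → 0⁺, for fixed M > 0 and ε > 0. -/
open Real Asymptotics Topology Filter

lemma quotient_sub_leading_term_eq {M ε δ : ℝ} (hM : M ≠ 0) (hδ : δ ≠ 0)
    (hden : 1 + ε * M * δ ≠ 0) :
    (-δ * M + 2 * (M * δ / 4)) / (2 * (ε + 1 / (M * δ))) - (-(M ^ 2 / 4) * δ ^ 2)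
      = ε * M ^ 3 / (4 * (1 + ε * M * δ)) * δ ^ 3 := by
  rw [show ε + 1 / (M * δ) = (1 + ε * M * δ) / (M * δ) by field_simp; ring]
  generalize hu : 1 + ε * M * δ = u at hden ⊢
  field_simp
  linear_combination -2 * hu

theorem stmt12_general (M ε : ℝ) (hM : 0 < M) :
    (fun δ : ℝ => (-δ * M + 2 * (M * δ / 4)) / (2 * (ε + 1 / (M * δ)))
        - (-(M ^ 2 / 4) * δ ^ 2))
      =O[𝓝[>] (0 : ℝ)] (fun δ : ℝ => δ ^ 3) := by
  have hcont : Continuous fun δ : ℝ => 1 + ε * M * δ := by fun_prop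
  have hden : ∀ᶠ δ in 𝓝[>] (0 : ℝ), 1 + ε * M * δ ≠ 0 :=
    nhdsWithin_le_nhds <| hcont.continuousAt.eventually_ne (by simp)
  have hcoeff : Tendsto (fun δ : ℝ => ε * M ^ 3 / (4 * (1 + ε * M * δ)))
      (𝓝[>] 0) (𝓝 (ε * M ^ 3 / (4 * (1 + ε * M * 0)))) :=
    (tendsto_const_nhds.div (tendsto_const_nhds.mul hcont.continuousAt.tendsto)
      (by simp)).mono_left nhdsWithin_le_nhds
  refine ((hcoeff.isBigO_one ℝ).mul (isBigO_refl (fun δ : ℝ => δ ^ 3) _)).congr' ?_ (by simp)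
  filter_upwards [self_mem_nhdsWithin, hden] with δ (hδ : 0 < δ) hδden
  exact (quotient_sub_leading_term_eq hM.ne' hδ.ne' hδden).symm

/-- With `‖η₊‖²_{L²(ℝ₊)} = ε + 1/(Mδ)` and `‖η₊'‖²_{L²(ℝ₊)} = Mδ/4`, the quantity
`(-δM + 2‖η₊'‖²)/(2‖η₊‖²)` equals `-(M²/4)δ² + O(δ³)` as `δ → 0⁺`. -/
theorem stmt12 (M ε : ℝ) (hM : 0 < M) (hε : 0 < ε) :
    (fun δ : ℝ => (-δ * M + 2 * (M * δ / 4)) / (2 * (ε + 1 / (M * δ)))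
        - (-(M ^ 2 / 4) * δ ^ 2))
      =O[𝓝[>] (0 : ℝ)] (fun δ : ℝ => δ ^ 3) :=
  stmt12_general M ε hM
end
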